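/- Let 0 < α < 1 and let T be a map on positive continuous functions on a compact set K with the property: if v ≤ w pointwise then T(w) ≤ T(v), and T(c·v) = c^{-α}·T(v) for every constant c > 0. If u₁, u₂ are fixed points of T and there exists C ≥ 1 with u₂ ≤ C·u₁ and u₁ ≤ C·u₂, then u₁ = u₂. -/

import Mathlib

/-!
If `u₂ ≤ m u₁` and `u₁ ≤ m u₂` for two fixed points of `T`, then applying the order-reversing,
`(-α)`-homogeneous map `T` to `u₂ ≤ m u₁` gives `m^(-α) u₁ ≤ u₂`, i.e. the comparison constant
improves from `m` to `m^α`. Iterating from `m = C` gives the constant `C^(αⁿ)`, which tends to `1`.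
-/

open Real Filter Topology

lemma le_of_forall_le_rpow_pow_mul {C α a b : ℝ} (hC : 0 < C) (hα0 : 0 ≤ α) (hα1 : α < 1)
    (h : ∀ n : ℕ, a ≤ C ^ (α ^ n) * b) : a ≤ b := by
  have hpow : Tendsto (fun n : ℕ => C ^ (α ^ n)) atTop (𝓝 1) := by
    simpa [Function.comp_def] using ((continuousAt_const_rpow hC.ne').tendsto).comp
      (tendsto_pow_atTop_nhds_zero_of_lt_one hα0 hα1)
  simpa using ge_of_tendsto (hpow.mul_const b) (Eventually.of_forall h)

section FixedPoints

variable {K : Type*} [TopologicalSpace K] {α : ℝ} {T : C(K, ℝ) → C(K, ℝ)}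
  (hmono : ∀ v w : C(K, ℝ), (∀ x, 0 < v x) → (∀ x, 0 < w x) →
    (∀ x, v x ≤ w x) → ∀ x, T w x ≤ T v x)
  (hhom : ∀ v : C(K, ℝ), (∀ x, 0 < v x) → ∀ c : ℝ, 0 < c → T (c • v) = c ^ (-α) • T v)
include hmono hhom

lemma le_rpow_mul_of_fixedPt_of_le_mul {v w : C(K, ℝ)} (hv : ∀ x, 0 < v x)
    (hw : ∀ x, 0 < w x) (hfv : T v = v) (hfw : T w = w) {m : ℝ} (hm : 0 < m)
    (hwv : ∀ x, w x ≤ m * v x) (x : K) : v x ≤ m ^ α * w x := by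
  have hmv : ∀ y, 0 < (m • v) y := fun y => mul_pos hm (hv y)
  have hT : m ^ (-α) * v x ≤ w x := by
    simpa [hhom v hv m hm, hfv, hfw] using hmono w (m • v) hw hmv hwv x
  rw [rpow_neg hm.le, inv_mul_le_iff₀ (rpow_pos_of_pos hm α)] at hT
  exact hT

lemma forall_le_rpow_pow_mul_of_fixedPt {u₁ u₂ : C(K, ℝ)} (h1 : ∀ x, 0 < u₁ x)
    (h2 : ∀ x, 0 < u₂ x) (hf1 : T u₁ = u₁) (hf2 : T u₂ = u₂) {C : ℝ} (hC : 0 < C)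
    (h12 : ∀ x, u₂ x ≤ C * u₁ x) (h21 : ∀ x, u₁ x ≤ C * u₂ x) (n : ℕ) :
    (∀ x, u₂ x ≤ C ^ (α ^ n) * u₁ x) ∧ (∀ x, u₁ x ≤ C ^ (α ^ n) * u₂ x) := by
  induction n with
  | zero => simpa using ⟨h12, h21⟩
  | succ n ih =>
    have hm : 0 < C ^ (α ^ n) := rpow_pos_of_pos hC _
    rw [pow_succ, rpow_mul hC.le]
    exact ⟨le_rpow_mul_of_fixedPt_of_le_mul hmono hhom h2 h1 hf2 hf1 hm ih.2,
      le_rpow_mul_of_fixedPt_of_le_mul hmono hhom h1 h2 hf1 hf2 hm ih.1⟩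

end FixedPoints

theorem stmt_5_general (K : Type*) [TopologicalSpace K]
    (α : ℝ) (hα0 : 0 < α) (hα1 : α < 1)
    (T : C(K, ℝ) → C(K, ℝ))
    (hmono : ∀ v w : C(K, ℝ), (∀ x, 0 < v x) → (∀ x, 0 < w x) →
      (∀ x, v x ≤ w x) → ∀ x, T w x ≤ T v x)
    (hhom : ∀ v : C(K, ℝ), (∀ x, 0 < v x) → ∀ c : ℝ, 0 < c → T (c • v) = c ^ (-α) • T v)
    (u₁ u₂ : C(K, ℝ)) (h1 : ∀ x, 0 < u₁ x) (h2 : ∀ x, 0 < u₂ x)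
    (hf1 : T u₁ = u₁) (hf2 : T u₂ = u₂)
    (C : ℝ) (hC : 1 ≤ C) (h12 : ∀ x, u₂ x ≤ C * u₁ x) (h21 : ∀ x, u₁ x ≤ C * u₂ x) :
    u₁ = u₂ := by
  have hC0 : 0 < C := one_pos.trans_le hC
  have hbound := forall_le_rpow_pow_mul_of_fixedPt hmono hhom h1 h2 hf1 hf2 hC0 h12 h21
  ext x
  exact le_antisymm
    (le_of_forall_le_rpow_pow_mul hC0 hα0.le hα1 fun n => (hbound n).2 x)
    (le_of_forall_le_rpow_pow_mul hC0 hα0.le hα1 fun n => (hbound n).1 x)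

theorem stmt_5 (K : Type*) [TopologicalSpace K] [CompactSpace K]
    (α : ℝ) (hα0 : 0 < α) (hα1 : α < 1)
    (T : C(K, ℝ) → C(K, ℝ))
    (hmono : ∀ v w : C(K, ℝ), (∀ x, 0 < v x) → (∀ x, 0 < w x) →
      (∀ x, v x ≤ w x) → ∀ x, T w x ≤ T v x)
    (hhom : ∀ v : C(K, ℝ), (∀ x, 0 < v x) → ∀ c : ℝ, 0 < c → T (c • v) = c ^ (-α) • T v)
    (u₁ u₂ : C(K, ℝ)) (h1 : ∀ x, 0 < u₁ x) (h2 : ∀ x, 0 < u₂ x)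
    (hf1 : T u₁ = u₁) (hf2 : T u₂ = u₂)
    (C : ℝ) (hC : 1 ≤ C) (h12 : ∀ x, u₂ x ≤ C * u₁ x) (h21 : ∀ x, u₁ x ≤ C * u₂ x) :
    u₁ = u₂ :=
  stmt_5_general K α hα0 hα1 T hmono hhom u₁ u₂ h1 h2 hf1 hf2 C hC h12 h21
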